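/- If G is an ambiguous k-molecule with two distinct bases A_k and B_k, then A_k ∪ B_k = V(G). -/

import Mathlib

open SimpleGraph

/-- `G` is `m`-connected in the sense of Menger: any two distinct vertices are
joined by `m` pairwise distinct, internally disjoint paths. -/
def MengerConnected {V : Type*} (m : ℕ) (G : SimpleGraph V) : Prop :=
  ∀ u v : V, u ≠ v → ∃ P : Fin m → G.Path u v, Function.Injective P ∧
    ∀ i j, i ≠ j → ∀ x, x ∈ (P i).1.support → x ∈ (P j).1.support → x = u ∨ x = v

/-- The connectivity of a graph: the largest `m` for which it is `m`-connected.
(With this definition the connectivity of the `k`-clique is `k-1`, as in the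
paper's convention.) -/
noncomputable def connectivity {V : Type*} (G : SimpleGraph V) : ℕ :=
  sSup {m | MengerConnected m G}

/-- The `k`-molecule `ϑ_{B_k}^{Bs,h}`: its vertices are a base `B_k` of `k`
vertices (the `Sum.inl` vertices) carrying the internal edge set `Bs`, together
with `h` further vertices `v₁, …, v_h` (the `Sum.inr` vertices), each adjacent
to every base vertex and to no other non-base vertex. -/
def molecule (k h : ℕ) (Bs : SimpleGraph (Fin k)) : SimpleGraph (Fin k ⊕ Fin h) where
  Adj x y :=
    match x, y with
    | Sum.inl a, Sum.inl b => Bs.Adj a b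
    | Sum.inl _, Sum.inr _ => True
    | Sum.inr _, Sum.inl _ => True
    | Sum.inr _, Sum.inr _ => False
  symm := ⟨by rintro (a | a) (b | b) hab <;> first | exact hab.symm | trivial⟩
  loopless := ⟨by rintro (a | a) hab <;> first | exact Bs.loopless a hab | exact Bs.irrefl hab | exact hab⟩

/-- `(G, A)` is a `k`-premolecule: `G` is isomorphic to a `k`-molecule via an
isomorphism sending `A` to the base. -/
def IsPremolecule {V : Type*} (k : ℕ) (G : SimpleGraph V) (A : Set V) : Prop :=
  ∃ (h : ℕ) (Bs : SimpleGraph (Fin k)) (e : G ≃g molecule k h Bs),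
    1 ≤ h ∧ k - connectivity Bs ≤ h ∧
    ∀ a : V, a ∈ A ↔ ∃ i : Fin k, e a = Sum.inl i

/-
A vertex `v` outside both bases is a non-base vertex for each of them, so with respect to `A`
it is adjacent to every vertex of `A` and to no other vertex, and likewise for `B`. Hence `A`
and `B` are both the neighbourhood of `v`, contradicting `A ≠ B`.
-/

namespace IsPremolecule

variable {V : Type*} {k : ℕ} {G : SimpleGraph V} {A : Set V}

lemma adj_of_mem_of_notMem (hA : IsPremolecule k G A) {a v : V} (ha : a ∈ A) (hv : v ∉ A) :
    G.Adj a v := by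
  obtain ⟨h, Bs, e, -, -, hmem⟩ := hA
  obtain ⟨i, hi⟩ := (hmem a).1 ha
  rcases hev : e v with j | j
  · exact absurd ((hmem v).2 ⟨j, hev⟩) hv
  · rw [← e.map_adj_iff, hi, hev]
    trivial

lemma not_adj_of_notMem (hA : IsPremolecule k G A) {u v : V} (hu : u ∉ A) (hv : v ∉ A) :
    ¬ G.Adj u v := by
  obtain ⟨h, Bs, e, -, -, hmem⟩ := hA
  rcases heu : e u with i | i
  · exact absurd ((hmem u).2 ⟨i, heu⟩) hu
  rcases hev : e v with j | j
  · exact absurd ((hmem v).2 ⟨j, hev⟩) hv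
  rw [← e.map_adj_iff, heu, hev]
  exact id

lemma subset_of_notMem {B : Set V} (hA : IsPremolecule k G A) (hB : IsPremolecule k G B)
    {v : V} (hvA : v ∉ A) (hvB : v ∉ B) : A ⊆ B := fun a ha => by
  by_contra haB
  exact hB.not_adj_of_notMem haB hvB (hA.adj_of_mem_of_notMem ha hvA)

end IsPremolecule

theorem ambiguous_molecule_bases_cover_general {V : Type*} (k : ℕ)
    (G : SimpleGraph V) (A B : Set V) (hAB : A ≠ B)
    (hA : IsPremolecule k G A) (hB : IsPremolecule k G B) :
    A ∪ B = Set.univ := by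
  refine Set.eq_univ_of_forall fun v => ?_
  by_contra hv
  obtain ⟨hvA, hvB⟩ := not_or.mp hv
  exact hAB ((hA.subset_of_notMem hB hvA hvB).antisymm (hB.subset_of_notMem hA hvB hvA))

/-- if `G` is an ambiguous `k`-molecule, i.e. it has two distinct
bases `A` and `B`, then `A ∪ B = V(G)`. -/
theorem ambiguous_molecule_bases_cover {V : Type*} [Fintype V] (k : ℕ)
    (G : SimpleGraph V) (A B : Set V) (hAB : A ≠ B)
    (hA : IsPremolecule k G A) (hB : IsPremolecule k G B) :
    A ∪ B = Set.univ :=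
  ambiguous_molecule_bases_cover_general k G A B hAB hA hB
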